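/- Suppose Ŝ = QᵀX + ΔS with ‖ΔS‖₂ ≤ δ‖X‖₂, T̂ = XᵀX + ΔT with ‖ΔT‖₂ ≤ δ'‖X‖₂², and ‖I - QᵀQ‖₂ ≤ ω. Then ‖(T̂ - ŜᵀŜ) - Xᵀ(I - QQᵀ)X‖₂ ≤ (δ' + 2√2(1+ω)^{1/2} δ + δ² + 2ω(1+ω))‖X‖₂²; in particular if ω, δ, δ' ≤ 1 this is at most (δ' + 4δ + δ² + 4ω)‖X‖₂². -/

import Mathlib

open Matrix

/-- Spectral norm (largest singular value) of a real matrix. -/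
noncomputable def sn {m n : ℕ} (A : Matrix (Fin m) (Fin n) ℝ) : ℝ :=
  sSup {c | ∃ x : EuclideanSpace ℝ (Fin n), ‖x‖ = 1 ∧
    c = ‖(WithLp.equiv 2 (Fin m → ℝ)).symm (A.mulVec ((WithLp.equiv 2 (Fin n → ℝ)) x))‖}

/-- Smallest singular value of a real matrix. -/
noncomputable def smin {m n : ℕ} (A : Matrix (Fin m) (Fin n) ℝ) : ℝ :=
  sInf {c | ∃ x : EuclideanSpace ℝ (Fin n), ‖x‖ = 1 ∧
    c = ‖(WithLp.equiv 2 (Fin m → ℝ)).symm (A.mulVec ((WithLp.equiv 2 (Fin n → ℝ)) x))‖}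

/-- Smallest eigenvalue (Rayleigh quotient infimum) of a square real matrix. -/
noncomputable def lmin {n : ℕ} (A : Matrix (Fin n) (Fin n) ℝ) : ℝ :=
  sInf {c | ∃ x : EuclideanSpace ℝ (Fin n), ‖x‖ = 1 ∧
    c = (inner ℝ x ((WithLp.equiv 2 (Fin n → ℝ)).symm (A.mulVec ((WithLp.equiv 2 (Fin n → ℝ)) x))) : ℝ)}

/-!
Expanding `Ŝ = QᵀX + ΔS`, the exact part contributes `XᵀQQᵀX`, which cancels against
`Xᵀ(I - QQᵀ)X` identically, so the deviation is `ΔT - XᵀQΔS - ΔSᵀQᵀX - ΔSᵀΔS`.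
Since `‖Q‖² = ‖QᵀQ‖ ≤ 1 + ω`, its norm is at most `(δ' + 2√(1+ω) δ + δ²)‖X‖²`, which is dominated by
both stated bounds.
-/

open scoped Matrix.Norms.L2Operator

lemma sn_eq_l2_opNorm {m n : ℕ} (A : Matrix (Fin m) (Fin n) ℝ) : sn A = ‖A‖ := by
  rw [sn, l2_opNorm_def, ← ContinuousLinearMap.sSup_sphere_eq_norm]
  congr 1
  ext c
  simp only [Set.mem_image, mem_sphere_zero_iff_norm, eq_comm]
  rfl

lemma perturbed_gram_sub_projected_gram_eq {R l m n : Type*} [CommRing R]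
    [Fintype m] [Fintype n] [DecidableEq m]
    (Q : Matrix m n R) (X : Matrix m l R) (ΔS : Matrix n l R) (ΔT : Matrix l l R) :
    (Xᵀ * X + ΔT - (Qᵀ * X + ΔS)ᵀ * (Qᵀ * X + ΔS)) - Xᵀ * (1 - Q * Qᵀ) * X
      = ΔT - Xᵀ * Q * ΔS - ΔSᵀ * (Qᵀ * X) - ΔSᵀ * ΔS := by
  simp only [transpose_add, transpose_mul, transpose_transpose, Matrix.add_mul,
    Matrix.mul_add, Matrix.mul_sub, Matrix.sub_mul, Matrix.mul_one, Matrix.mul_assoc]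
  abel

section

variable {l m n : Type*} [Fintype l] [Fintype m] [Fintype n]

lemma l2_opNorm_transpose [DecidableEq m] [DecidableEq n] (A : Matrix m n ℝ) :
    ‖Aᵀ‖ = ‖A‖ := by
  rw [← conjTranspose_eq_transpose_of_trivial, l2_opNorm_conjTranspose]

lemma l2_opNorm_transpose_mul_self [DecidableEq n] (A : Matrix m n ℝ) :
    ‖Aᵀ * A‖ = ‖A‖ ^ 2 := by
  rw [← conjTranspose_eq_transpose_of_trivial, l2_opNorm_conjTranspose_mul_self, sq]

lemma l2_opNorm_one_le [DecidableEq n] : ‖(1 : Matrix n n ℝ)‖ ≤ 1 := by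
  rw [l2_opNorm_def]
  exact ContinuousLinearMap.opNorm_le_bound _ zero_le_one fun x => by simp

lemma l2_opNorm_le_sqrt_of_l2_opNorm_one_sub_gram_le [DecidableEq n] {ω : ℝ}
    (Q : Matrix m n ℝ) (hQ : ‖1 - Qᵀ * Q‖ ≤ ω) : ‖Q‖ ≤ √(1 + ω) := by
  refine Real.le_sqrt_of_sq_le ?_
  rw [← l2_opNorm_transpose_mul_self, ← sub_sub_cancel 1 (Qᵀ * Q)]
  exact (norm_sub_le _ _).trans (add_le_add l2_opNorm_one_le hQ)

lemma l2_opNorm_gram_perturbation_le [DecidableEq l] [DecidableEq m] [DecidableEq n]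
    (Q : Matrix m n ℝ) (X : Matrix m l ℝ) (ΔS : Matrix n l ℝ) (ΔT : Matrix l l ℝ) :
    ‖ΔT - Xᵀ * Q * ΔS - ΔSᵀ * (Qᵀ * X) - ΔSᵀ * ΔS‖
      ≤ ‖ΔT‖ + 2 * (‖X‖ * ‖Q‖ * ‖ΔS‖) + ‖ΔS‖ ^ 2 := by
  have h₁ : ‖Xᵀ * Q * ΔS‖ ≤ ‖X‖ * ‖Q‖ * ‖ΔS‖ := by
    rw [← l2_opNorm_transpose X]
    exact (l2_opNorm_mul _ _).trans (by gcongr; exact l2_opNorm_mul _ _)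
  have h₂ : ‖ΔSᵀ * (Qᵀ * X)‖ ≤ ‖X‖ * ‖Q‖ * ‖ΔS‖ := by
    rw [← l2_opNorm_transpose]
    simpa only [transpose_mul, transpose_transpose] using h₁
  have h₃ := norm_sub_le (ΔT - Xᵀ * Q * ΔS - ΔSᵀ * (Qᵀ * X)) (ΔSᵀ * ΔS)
  have h₄ := norm_sub_le (ΔT - Xᵀ * Q * ΔS) (ΔSᵀ * (Qᵀ * X))
  have h₅ := norm_sub_le ΔT (Xᵀ * Q * ΔS)
  rw [l2_opNorm_transpose_mul_self] at h₃
  linarith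

end

theorem computed_pythagorean_gram_deviation
    {m t s : ℕ} (Q : Matrix (Fin m) (Fin t) ℝ) (X : Matrix (Fin m) (Fin s) ℝ)
    (Shat ΔS : Matrix (Fin t) (Fin s) ℝ)
    (That ΔT : Matrix (Fin s) (Fin s) ℝ)
    (δ δ' ω : ℝ)
    (hS : Shat = Qᵀ * X + ΔS) (hΔS : sn ΔS ≤ δ * sn X)
    (hT : That = Xᵀ * X + ΔT) (hΔT : sn ΔT ≤ δ' * sn X ^ 2)
    (hQ : sn ((1 : Matrix (Fin t) (Fin t) ℝ) - Qᵀ * Q) ≤ ω) :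
    sn ((That - Shatᵀ * Shat)
          - Xᵀ * ((1 : Matrix (Fin m) (Fin m) ℝ) - Q * Qᵀ) * X)
      ≤ (δ' + 2 * Real.sqrt 2 * Real.sqrt (1 + ω) * δ + δ ^ 2 + 2 * ω * (1 + ω))
          * sn X ^ 2
    ∧ (ω ≤ 1 → δ ≤ 1 → δ' ≤ 1 →
        sn ((That - Shatᵀ * Shat)
              - Xᵀ * ((1 : Matrix (Fin m) (Fin m) ℝ) - Q * Qᵀ) * X)
          ≤ (δ' + 4 * δ + δ ^ 2 + 4 * ω) * sn X ^ 2) := by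
  simp only [sn_eq_l2_opNorm] at *
  subst hS hT
  rw [perturbed_gram_sub_projected_gram_eq]
  have hω : 0 ≤ ω := (norm_nonneg _).trans hQ
  have hq := l2_opNorm_le_sqrt_of_l2_opNorm_one_sub_gram_le Q hQ
  have hδ : 0 ≤ δ * ‖X‖ ^ 2 := by
    rw [sq, ← mul_assoc]; exact mul_nonneg ((norm_nonneg _).trans hΔS) (norm_nonneg _)
  have sharp : ‖ΔT - Xᵀ * Q * ΔS - ΔSᵀ * (Qᵀ * X) - ΔSᵀ * ΔS‖
      ≤ (δ' + 2 * √(1 + ω) * δ + δ ^ 2) * ‖X‖ ^ 2 :=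
    calc _ ≤ ‖ΔT‖ + 2 * (‖X‖ * ‖Q‖ * ‖ΔS‖) + ‖ΔS‖ ^ 2 := l2_opNorm_gram_perturbation_le ..
      _ ≤ δ' * ‖X‖ ^ 2 + 2 * (‖X‖ * √(1 + ω) * (δ * ‖X‖)) + (δ * ‖X‖) ^ 2 := by gcongr
      _ = _ := by ring
  have hsqrt2 : 1 ≤ √2 := Real.one_le_sqrt.mpr one_le_two
  refine ⟨sharp.trans ?_, fun hω₁ _ _ => sharp.trans ?_⟩
  · nlinarith [mul_nonneg (mul_nonneg (sub_nonneg.mpr hsqrt2) (Real.sqrt_nonneg (1 + ω))) hδ,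
      mul_nonneg (mul_nonneg hω (by linarith : (0:ℝ) ≤ 1 + ω)) (sq_nonneg ‖X‖)]
  · have h2 : √(1 + ω) ≤ 2 := Real.sqrt_le_iff.mpr ⟨zero_le_two, by linarith⟩
    nlinarith [mul_nonneg (sub_nonneg.mpr h2) hδ, mul_nonneg hω (sq_nonneg ‖X‖)]
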